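/- Uniqueness of the solution to the identification system: fix ν₀ < ν₁ in ℝ. The map (μ,ρ) ↦ (Φ₂(μ,ν₁;ρ), Φ₂(μ,ν₀;ρ)) from ℝ × (-1,1) to ℝ² is injective. -/
import Mathlib


open MeasureTheory Real Set Filter

noncomputable def stdPdf (x : ℝ) : ℝ := (Real.sqrt (2 * Real.pi))⁻¹ * Real.exp (-(x ^ 2) / 2)

noncomputable def stdCdf (x : ℝ) : ℝ := ∫ v in Set.Iio x, stdPdf v

noncomputable def Phi2 (μ ν ρ : ℝ) : ℝ :=
  ∫ v in Set.Iio μ, stdCdf ((ν - ρ * v) / Real.sqrt (1 - ρ ^ 2)) * stdPdf v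

noncomputable def phi2 (μ ν ρ : ℝ) : ℝ :=
  (2 * Real.pi * Real.sqrt (1 - ρ ^ 2))⁻¹ *
    Real.exp (-(μ ^ 2 - 2 * ρ * μ * ν + ν ^ 2) / (2 * (1 - ρ ^ 2)))



lemma stdPdf_pos (x : ℝ) : 0 < stdPdf x := by
  unfold stdPdf
  positivity

lemma continuous_stdPdf : Continuous stdPdf := by
  unfold stdPdf
  continuity

lemma integrable_stdPdf : Integrable stdPdf := by
  have h : stdPdf = fun x => (Real.sqrt (2 * Real.pi))⁻¹ * Real.exp (-(1/2 : ℝ) * x ^ 2) := by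
    funext x; unfold stdPdf; ring_nf
  rw [h]
  exact (integrable_exp_neg_mul_sq (by norm_num : (0:ℝ) < 1/2)).const_mul _

lemma integral_stdPdf : ∫ x, stdPdf x = 1 := by
  have h : ∀ x : ℝ, stdPdf x = (Real.sqrt (2 * Real.pi))⁻¹ * Real.exp (-(1/2 : ℝ) * x ^ 2) := by
    intro x; unfold stdPdf; ring_nf
  simp_rw [h]
  rw [integral_const_mul, integral_gaussian]
  rw [inv_mul_eq_one₀]
  · rw [show (2:ℝ) * Real.pi = Real.pi / (1/2) by ring]
  · positivity

lemma stdCdf_nonneg (x : ℝ) : 0 ≤ stdCdf x :=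
  setIntegral_nonneg measurableSet_Iio fun y _ => (stdPdf_pos y).le

lemma stdCdf_le_one (x : ℝ) : stdCdf x ≤ 1 := by
  rw [← integral_stdPdf]
  exact setIntegral_le_integral integrable_stdPdf
    (Filter.Eventually.of_forall fun y => (stdPdf_pos y).le)

lemma stdCdf_strictMono : StrictMono stdCdf := by
  intro a b hab
  have hdisj : Disjoint (Set.Iio a) (Set.Ico a b) :=
    Set.disjoint_left.2 fun x hx hx2 => absurd hx2.1 (not_le.2 hx)
  have hu : Set.Iio a ∪ Set.Ico a b = Set.Iio b := Set.Iio_union_Ico_eq_Iio hab.le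
  have h := setIntegral_union hdisj measurableSet_Ico
    integrable_stdPdf.integrableOn integrable_stdPdf.integrableOn (f := stdPdf)
  rw [hu] at h
  have hpos : 0 < ∫ x in Set.Ico a b, stdPdf x := by
    rw [setIntegral_pos_iff_support_of_nonneg_ae]
    · have : Function.support stdPdf ∩ Set.Ico a b = Set.Ico a b := by
        apply Set.inter_eq_self_of_subset_right
        intro x _
        exact (stdPdf_pos x).ne'
      rw [this, Real.volume_Ico]
      simp [hab]
    · exact Filter.Eventually.of_forall fun y => (stdPdf_pos y).le
    · exact integrable_stdPdf.integrableOn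
  show stdCdf a < stdCdf b
  unfold stdCdf
  rw [h]
  linarith

lemma measurable_stdCdf : Measurable stdCdf :=
  stdCdf_strictMono.monotone.measurable

lemma integral_comp_affine_whole (f : ℝ → ℝ) (c : ℝ) {b : ℝ} (hb : 0 < b) :
    ∫ x, f ((x - c) / b) = b * ∫ x, f x := by
  have h1 : ∫ x, f ((x - c) / b) = ∫ x, (fun y => f (y / b)) (x - c) := rfl
  rw [h1, integral_sub_right_eq_self (fun y => f (y / b)) c, Measure.integral_comp_div f b,
    smul_eq_mul, abs_of_pos hb]

lemma integrable_comp_affine {f : ℝ → ℝ} (hf : Integrable f) (c : ℝ) {b : ℝ} (hb : 0 < b) :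
    Integrable (fun x => f ((x - c) / b)) := by
  have h2 : Integrable (fun y => f (y / b)) := hf.comp_div (ne_of_gt hb)
  exact h2.comp_sub_right c


lemma integral_comp_affine_Iio (f : ℝ → ℝ) (a c : ℝ) {b : ℝ} (hb : 0 < b) :
    ∫ x in Set.Iio a, f ((x - c) / b) = b * ∫ y in Set.Iio ((a - c) / b), f y := by
  rw [← integral_indicator measurableSet_Iio, ← integral_indicator measurableSet_Iio]
  have hiff : ∀ x : ℝ, x < a ↔ (x - c) / b < (a - c) / b := by
    intro x
    rw [div_lt_div_iff_of_pos_right hb]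
    constructor <;> intro h <;> linarith
  have key : ∀ x, (Set.Iio a).indicator (fun x => f ((x - c) / b)) x
      = (Set.Iio ((a - c) / b)).indicator f ((x - c) / b) := by
    intro x
    by_cases h : x < a
    · rw [Set.indicator_of_mem (Set.mem_Iio.mpr h), Set.indicator_of_mem (Set.mem_Iio.mpr ((hiff x).1 h))]
    · rw [Set.indicator_of_notMem (fun hh => h (Set.mem_Iio.mp hh)), Set.indicator_of_notMem (fun hh => h ((hiff x).2 (Set.mem_Iio.mp hh)))]
  simp_rw [key]
  exact integral_comp_affine_whole ((Set.Iio ((a - c) / b)).indicator f) c hb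

lemma stdPdf_mul_symm {ρ : ℝ} (hρ : ρ ^ 2 < 1) (v w : ℝ) :
    stdPdf ((w - ρ * v) / Real.sqrt (1 - ρ ^ 2)) * stdPdf v
      = stdPdf ((v - ρ * w) / Real.sqrt (1 - ρ ^ 2)) * stdPdf w := by
  have h01 : (0:ℝ) < 1 - ρ ^ 2 := by linarith
  have hs2 : (Real.sqrt (1 - ρ ^ 2)) ^ 2 = 1 - ρ ^ 2 := Real.sq_sqrt h01.le
  have hsne : Real.sqrt (1 - ρ ^ 2) ≠ 0 := by positivity
  unfold stdPdf
  rw [mul_mul_mul_comm, ← Real.exp_add, mul_mul_mul_comm, ← Real.exp_add]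
  have key : ((w - ρ * v) / Real.sqrt (1 - ρ ^ 2)) ^ 2 + v ^ 2
      = ((v - ρ * w) / Real.sqrt (1 - ρ ^ 2)) ^ 2 + w ^ 2 := by
    rw [div_pow, div_pow, hs2]
    field_simp
    ring
  have hexp : -((w - ρ * v) / Real.sqrt (1 - ρ ^ 2)) ^ 2 / 2 + -v ^ 2 / 2
      = -((v - ρ * w) / Real.sqrt (1 - ρ ^ 2)) ^ 2 / 2 + -w ^ 2 / 2 := by linarith [key]
  rw [hexp]

lemma Phi2_symm (μ ν ρ : ℝ) (hρ1 : -1 < ρ) (hρ2 : ρ < 1) :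
    Phi2 μ ν ρ = ∫ w in Set.Iio ν,
      stdCdf ((μ - ρ * w) / Real.sqrt (1 - ρ ^ 2)) * stdPdf w := by
  have hρsq : ρ ^ 2 < 1 := by nlinarith
  have h01 : (0:ℝ) < 1 - ρ ^ 2 := by linarith
  set s : ℝ := Real.sqrt (1 - ρ ^ 2) with hsdef
  have hs : 0 < s := Real.sqrt_pos.2 h01
  set F : ℝ → ℝ → ℝ := fun v w => s⁻¹ * stdPdf v * stdPdf ((w - ρ * v) / s) with hF
  -- inner rewriting of Phi2 integrand
  have h1 : ∀ v : ℝ, stdCdf ((ν - ρ * v) / s) * stdPdf v = ∫ w in Set.Iio ν, F v w := by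
    intro v
    rw [hF]
    simp only
    rw [integral_const_mul, integral_comp_affine_Iio stdPdf ν (ρ * v) hs]
    show stdCdf ((ν - ρ * v) / s) * stdPdf v = s⁻¹ * stdPdf v * (s * stdCdf ((ν - ρ * v) / s))
    field_simp
  -- integrability of uncurried F on the product of restricted measures
  have hFmeas : Continuous (Function.uncurry F) := by
    apply Continuous.mul
    · exact continuous_const.mul (continuous_stdPdf.comp continuous_fst)
    · exact continuous_stdPdf.comp (((continuous_snd.sub (continuous_const.mul continuous_fst))).div_const s)
  have hFint : Integrable (Function.uncurry F) (volume.prod volume) := by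
    rw [integrable_prod_iff hFmeas.aestronglyMeasurable]
    constructor
    · refine Filter.Eventually.of_forall fun v => ?_
      exact ((integrable_comp_affine integrable_stdPdf (ρ * v) hs).const_mul (s⁻¹ * stdPdf v))
    · have hcalc : ∀ v : ℝ, (∫ w, ‖F v w‖) = stdPdf v := by
        intro v
        have hnn : ∀ w, ‖F v w‖ = F v w := by
          intro w
          rw [Real.norm_of_nonneg]
          rw [hF]
          have := stdPdf_pos v
          have := stdPdf_pos ((w - ρ * v) / s)
          positivity
        simp_rw [hnn, hF]
        rw [integral_const_mul, integral_comp_affine_whole stdPdf (ρ * v) hs, integral_stdPdf]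
        field_simp
      exact integrable_stdPdf.congr (Filter.Eventually.of_forall fun v => (hcalc v).symm)
  have hFres : Integrable (Function.uncurry F)
      ((volume.restrict (Set.Iio μ)).prod (volume.restrict (Set.Iio ν))) := by
    rw [Measure.prod_restrict]
    exact hFint.integrableOn
  -- Fubini
  have hswap : ∫ v in Set.Iio μ, ∫ w in Set.Iio ν, F v w
      = ∫ w in Set.Iio ν, ∫ v in Set.Iio μ, F v w :=
    integral_integral_swap hFres
  -- pointwise symmetry
  have hsym : ∀ v w : ℝ, F v w = s⁻¹ * stdPdf w * stdPdf ((v - ρ * w) / s) := by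
    intro v w
    rw [hF]
    simp only
    rw [mul_assoc, mul_assoc, mul_comm (stdPdf v), mul_comm (stdPdf w), stdPdf_mul_symm hρsq]
  have h2 : ∀ w : ℝ, (∫ v in Set.Iio μ, F v w) = stdCdf ((μ - ρ * w) / s) * stdPdf w := by
    intro w
    calc (∫ v in Set.Iio μ, F v w) = ∫ v in Set.Iio μ, s⁻¹ * stdPdf w * stdPdf ((v - ρ * w) / s) := by
          simp_rw [hsym]
      _ = s⁻¹ * stdPdf w * ∫ v in Set.Iio μ, stdPdf ((v - ρ * w) / s) := by
          rw [integral_const_mul]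
      _ = s⁻¹ * stdPdf w * (s * stdCdf ((μ - ρ * w) / s)) := by
          rw [integral_comp_affine_Iio stdPdf μ (ρ * w) hs]
          rfl
      _ = stdCdf ((μ - ρ * w) / s) * stdPdf w := by field_simp
  unfold Phi2
  simp_rw [← hsdef, h1, hswap, h2]

lemma integrable_cdf_mul_pdf (μ ρ : ℝ) :
    Integrable (fun w => stdCdf ((μ - ρ * w) / Real.sqrt (1 - ρ ^ 2)) * stdPdf w) := by
  apply Integrable.mono integrable_stdPdf
  · apply Measurable.aestronglyMeasurable
    apply Measurable.mul
    · exact measurable_stdCdf.comp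
        ((measurable_const.sub (measurable_id.const_mul ρ)).div_const _)
    · exact (continuous_const.mul
        (Real.continuous_exp.comp (by continuity))).measurable
  · refine Filter.Eventually.of_forall fun w => ?_
    have h1 := stdCdf_nonneg ((μ - ρ * w) / Real.sqrt (1 - ρ ^ 2))
    have h2 := stdCdf_le_one ((μ - ρ * w) / Real.sqrt (1 - ρ ^ 2))
    have h3 := (stdPdf_pos w).le
    rw [Real.norm_of_nonneg (by positivity), Real.norm_of_nonneg h3]
    nlinarith


lemma setIntegral_pos_of_pos {f : ℝ → ℝ} {S T : Set ℝ} (hS : MeasurableSet S)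
    (hT : T ⊆ S) (hvolT : 0 < volume T) (hint : IntegrableOn f S)
    (hnn : ∀ w ∈ S, 0 ≤ f w) (hpos : ∀ w ∈ T, 0 < f w) :
    0 < ∫ w in S, f w := by
  rw [setIntegral_pos_iff_support_of_nonneg_ae
    ((ae_restrict_iff' hS).2 (Filter.Eventually.of_forall hnn)) hint]
  have hsub : T ⊆ Function.support f ∩ S :=
    fun w hw => ⟨(hpos w hw).ne', hT hw⟩
  exact lt_of_lt_of_le hvolT (measure_mono hsub)

lemma setIntegral_neg_of_neg {f : ℝ → ℝ} {S T : Set ℝ} (hS : MeasurableSet S)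
    (hT : T ⊆ S) (hvolT : 0 < volume T) (hint : IntegrableOn f S)
    (hnp : ∀ w ∈ S, f w ≤ 0) (hneg : ∀ w ∈ T, f w < 0) :
    ∫ w in S, f w < 0 := by
  have := setIntegral_pos_of_pos (f := fun w => -f w) hS hT hvolT hint.neg
    (fun w hw => neg_nonneg.2 (hnp w hw)) (fun w hw => neg_pos.2 (hneg w hw))
  rw [integral_neg] at this
  linarith

set_option maxHeartbeats 2000000 in
theorem stmt11 (ν₀ ν₁ : ℝ) (hν : ν₀ < ν₁) :
    Set.InjOn (fun p : ℝ × ℝ => (Phi2 p.1 ν₁ p.2, Phi2 p.1 ν₀ p.2))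
      (Set.univ ×ˢ Set.Ioo (-1 : ℝ) 1) := by
  rintro ⟨μ, ρ⟩ hp ⟨μ', ρ'⟩ hq heq
  simp only [Set.mem_prod, Set.mem_univ, Set.mem_Ioo, true_and] at hp hq
  obtain ⟨hρ1, hρ2⟩ := hp
  obtain ⟨hρ1', hρ2'⟩ := hq
  simp only [Prod.mk.injEq] at heq
  obtain ⟨heq1, heq0⟩ := heq
  set s : ℝ := Real.sqrt (1 - ρ ^ 2) with hsdef
  set s' : ℝ := Real.sqrt (1 - ρ' ^ 2) with hs'def
  have hρsq : ρ ^ 2 < 1 := by nlinarith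
  have hρ'sq : ρ' ^ 2 < 1 := by nlinarith
  have hs : 0 < s := Real.sqrt_pos.2 (by linarith)
  have hs' : 0 < s' := Real.sqrt_pos.2 (by linarith)
  have hs2 : s ^ 2 = 1 - ρ ^ 2 := Real.sq_sqrt (by linarith)
  have hs'2 : s' ^ 2 = 1 - ρ' ^ 2 := Real.sq_sqrt (by linarith)
  clear_value s s'
  set g : ℝ → ℝ := fun w =>
    (stdCdf ((μ - ρ * w) / s) - stdCdf ((μ' - ρ' * w) / s')) * stdPdf w with hgdef
  have hg_int : Integrable g := by
    have := (integrable_cdf_mul_pdf μ ρ).sub (integrable_cdf_mul_pdf μ' ρ')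
    refine this.congr (Filter.Eventually.of_forall fun w => ?_)
    rw [hgdef]
    simp only [Pi.sub_apply, ← hsdef, ← hs'def]
    ring
  have key : ∀ ν : ℝ, ∫ w in Set.Iio ν, g w = Phi2 μ ν ρ - Phi2 μ' ν ρ' := by
    intro ν
    rw [Phi2_symm μ ν ρ hρ1 hρ2, Phi2_symm μ' ν ρ' hρ1' hρ2',
      ← integral_sub (integrable_cdf_mul_pdf μ ρ).integrableOn
        (integrable_cdf_mul_pdf μ' ρ').integrableOn]
    refine setIntegral_congr_fun measurableSet_Iio fun w _ => ?_
    rw [hgdef]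
    simp only [← hsdef, ← hs'def]
    ring
  have h0 : ∫ w in Set.Iio ν₀, g w = 0 := by rw [key, heq0, sub_self]
  have h1 : ∫ w in Set.Iio ν₁, g w = 0 := by rw [key, heq1, sub_self]
  have hdisj : Disjoint (Set.Iio ν₀) (Set.Ico ν₀ ν₁) :=
    Set.disjoint_left.2 fun x hx hx2 => absurd hx2.1 (not_le.2 hx)
  have hunion : Set.Iio ν₀ ∪ Set.Ico ν₀ ν₁ = Set.Iio ν₁ := Set.Iio_union_Ico_eq_Iio hν.le
  have hI : ∫ w in Set.Ico ν₀ ν₁, g w = 0 := by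
    have := setIntegral_union hdisj measurableSet_Ico hg_int.integrableOn hg_int.integrableOn
      (f := g)
    rw [hunion, h1, h0] at this
    linarith
  set α : ℝ := ρ' / s' - ρ / s with hαdef
  set β : ℝ := μ / s - μ' / s' with hβdef
  clear_value α β
  have hLlin : ∀ w : ℝ, (μ - ρ * w) / s - (μ' - ρ' * w) / s' = β + α * w := by
    intro w
    rw [hαdef, hβdef]
    field_simp [hs.ne', hs'.ne']
    ring
  have hgpos : ∀ w : ℝ, 0 < β + α * w → 0 < g w := by
    intro w hw
    rw [hgdef]
    have hlt : stdCdf ((μ' - ρ' * w) / s') < stdCdf ((μ - ρ * w) / s) :=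
      stdCdf_strictMono (by linarith [hLlin w])
    have := stdPdf_pos w
    nlinarith
  have hgneg : ∀ w : ℝ, β + α * w < 0 → g w < 0 := by
    intro w hw
    rw [hgdef]
    have hlt : stdCdf ((μ - ρ * w) / s) < stdCdf ((μ' - ρ' * w) / s') :=
      stdCdf_strictMono (by linarith [hLlin w])
    have := stdPdf_pos w
    nlinarith
  have hgnonneg : ∀ w : ℝ, 0 ≤ β + α * w → 0 ≤ g w := by
    intro w hw
    rw [hgdef]
    have hle : stdCdf ((μ' - ρ' * w) / s') ≤ stdCdf ((μ - ρ * w) / s) :=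
      stdCdf_strictMono.monotone (by linarith [hLlin w])
    have := stdPdf_pos w
    nlinarith
  have hgnonpos : ∀ w : ℝ, β + α * w ≤ 0 → g w ≤ 0 := by
    intro w hw
    rw [hgdef]
    have hle : stdCdf ((μ - ρ * w) / s) ≤ stdCdf ((μ' - ρ' * w) / s') :=
      stdCdf_strictMono.monotone (by linarith [hLlin w])
    have := stdPdf_pos w
    nlinarith
  have hvol0 : 0 < volume (Set.Iio ν₀) := by
    rw [Real.volume_Iio]; exact ENNReal.zero_lt_top
  have hvolI : 0 < volume (Set.Ioo ν₀ ν₁) := by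
    rw [Real.volume_Ioo]; exact ENNReal.ofReal_pos.2 (by linarith)
  have hαβ : α = 0 ∧ β = 0 := by
    by_contra hcon
    rcases eq_or_ne α 0 with hα | hα
    · have hβ : β ≠ 0 := fun hβ => hcon ⟨hα, hβ⟩
      rcases hβ.lt_or_gt with hβn | hβp
      · refine absurd h0 (ne_of_lt (setIntegral_neg_of_neg measurableSet_Iio
          (Set.Subset.refl _) hvol0 hg_int.integrableOn
          (fun w _ => hgnonpos w (by rw [hα]; simpa using hβn.le))
          (fun w _ => hgneg w (by rw [hα]; simpa using hβn))))
      · refine absurd h0 (ne_of_gt (setIntegral_pos_of_pos measurableSet_Iio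
          (Set.Subset.refl _) hvol0 hg_int.integrableOn
          (fun w _ => hgnonneg w (by rw [hα]; simpa using hβp.le))
          (fun w _ => hgpos w (by rw [hα]; simpa using hβp))))
    · set wstar : ℝ := -β / α with hwdef
      have hLfac : ∀ w : ℝ, β + α * w = α * (w - wstar) := by
        intro w
        rw [hwdef]
        field_simp
        ring
      rcases le_or_gt wstar ν₀ with hcase | hcase
      · have hsubT : Set.Ioo ν₀ ν₁ ⊆ Set.Ico ν₀ ν₁ := Set.Ioo_subset_Ico_self
        rcases hα.lt_or_gt with hαn | hαp
        · refine absurd hI (ne_of_lt (setIntegral_neg_of_neg measurableSet_Ico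
            hsubT hvolI hg_int.integrableOn
            (fun w hw => hgnonpos w (by
              rw [hLfac]
              exact mul_nonpos_of_nonpos_of_nonneg hαn.le (by
                simp only [Set.mem_Ico] at hw; linarith)))
            (fun w hw => hgneg w (by
              rw [hLfac]
              exact mul_neg_of_neg_of_pos hαn (by
                simp only [Set.mem_Ioo] at hw; linarith)))))
        · refine absurd hI (ne_of_gt (setIntegral_pos_of_pos measurableSet_Ico
            hsubT hvolI hg_int.integrableOn
            (fun w hw => hgnonneg w (by
              rw [hLfac]
              exact mul_nonneg hαp.le (by
                simp only [Set.mem_Ico] at hw; linarith)))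
            (fun w hw => hgpos w (by
              rw [hLfac]
              exact mul_pos hαp (by
                simp only [Set.mem_Ioo] at hw; linarith)))))
      · rcases hα.lt_or_gt with hαn | hαp
        · refine absurd h0 (ne_of_gt (setIntegral_pos_of_pos measurableSet_Iio
            (Set.Subset.refl _) hvol0 hg_int.integrableOn
            (fun w hw => hgnonneg w (by
              rw [hLfac]
              simp only [Set.mem_Iio] at hw
              nlinarith [mul_nonneg (neg_nonneg.2 hαn.le)
                (sub_nonneg.2 (le_of_lt (lt_trans hw hcase)))]))
            (fun w hw => hgpos w (by
              rw [hLfac]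
              exact mul_pos_of_neg_of_neg hαn (by
                simp only [Set.mem_Iio] at hw; linarith)))))
        · refine absurd h0 (ne_of_lt (setIntegral_neg_of_neg measurableSet_Iio
            (Set.Subset.refl _) hvol0 hg_int.integrableOn
            (fun w hw => hgnonpos w (by
              rw [hLfac]
              exact mul_nonpos_of_nonneg_of_nonpos hαp.le (by
                simp only [Set.mem_Iio] at hw; linarith)))
            (fun w hw => hgneg w (by
              rw [hLfac]
              exact mul_neg_of_pos_of_neg hαp (by
                simp only [Set.mem_Iio] at hw; linarith)))))
  obtain ⟨hα0, hβ0⟩ := hαβ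
  have hdd : ρ' / s' = ρ / s := by
    have := hα0
    rw [hαdef] at this
    linarith
  have hcross : ρ' * s = ρ * s' := (div_eq_div_iff hs'.ne' hs.ne').1 hdd
  have hρρ' : ρ = ρ' := by
    have hsq : ρ' ^ 2 * (s ^ 2) = ρ ^ 2 * (s' ^ 2) := by
      have := congrArg (fun x : ℝ => x ^ 2) hcross
      simp only [mul_pow] at this
      linarith
    rw [hs2, hs'2] at hsq
    have hsqeq : ρ ^ 2 = ρ' ^ 2 := by nlinarith
    have hss' : s = s' := by rw [hsdef, hs'def, hsqeq]
    rw [hss'] at hcross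
    exact (mul_right_cancel₀ hs'.ne' hcross).symm
  have hss' : s = s' := by rw [hsdef, hs'def, hρρ']
  have hμμ' : μ = μ' := by
    have hb := hβ0
    rw [hβdef, ← hss'] at hb
    have : μ / s = μ' / s := by linarith
    field_simp [hs.ne'] at this
    exact this
  rw [Prod.mk.injEq]
  exact ⟨hμμ', hρρ'⟩
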